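/- arXiv:cs/0504103 — 8 statements merged into one kernel-verified Lean document; each statement's English description precedes it below -/
import Mathlib

section
/- Let (x_n) be a sequence of positive reals and let s_n = x_1 + x_2 + ... + x_n. If there exists a real a < 4 such that s_{n+1}/x_n < a for all n ≥ 1, then a contradiction follows; equivalently, for every sequence of positive reals, sup_n s_{n+1}/x_n ≥ 4. -/
/-!
Suppose `s (n+1) < a * x n` for all `n ≥ 1`, and write `t m = s (m+1)`, a positive increasing
sequence with `t (m+2) < a * (t (m+1) - t m)`. The ratios `r m = t (m+1) / t m` then satisfy
`r (m+1) < a - a / r m`, and since `r + a / r ≥ 2 √a` this is at most `r m - (2 √a - a)`.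
For `0 < a < 4` the gap `2 √a - a` is positive, so the ratios decrease without bound,
contradicting `r m > 0`.
-/

lemma exists_pos_forall_sub_div_le {a : ℝ} (ha₀ : 0 < a) (ha₄ : a < 4) :
    ∃ δ > 0, ∀ r > 0, a - a / r ≤ r - δ := by
  have hsq : √a ^ 2 = a := Real.sq_sqrt ha₀.le
  have hsqrt_lt : √a < 2 := by nlinarith [Real.sqrt_nonneg a]
  refine ⟨2 * √a - a, by nlinarith [Real.sqrt_pos.2 ha₀], fun r hr => ?_⟩
  have hgap : r - (2 * √a - a) - (a - a / r) = (r - √a) ^ 2 / r := by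
    field_simp
    linear_combination -hsq
  have : 0 ≤ (r - √a) ^ 2 / r := by positivity
  linarith

lemma exists_lt_of_le_sub {r : ℕ → ℝ} {δ : ℝ} (hδ : 0 < δ) (h : ∀ m, r (m + 1) ≤ r m - δ)
    (b : ℝ) : ∃ m, r m < b := by
  have hlin : ∀ m : ℕ, r m ≤ r 0 - m * δ := by
    intro m
    induction m with
    | zero => simp
    | succ k ih =>
      push_cast
      linarith [h k]
  obtain ⟨m, hm⟩ := exists_nat_gt ((r 0 - b) / δ)
  rw [div_lt_iff₀ hδ] at hm
  exact ⟨m, by linarith [hlin m]⟩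

theorem StrictMono.not_forall_lt_mul_sub {t : ℕ → ℝ} (ht : StrictMono t) (h₀ : 0 < t 0)
    {a : ℝ} (ha : a < 4) : ¬ ∀ m, t (m + 2) < a * (t (m + 1) - t m) := by
  intro h
  have hpos : ∀ m, 0 < t m := fun m => h₀.trans_le (ht.monotone m.zero_le)
  have ha₀ : 0 < a :=
    pos_of_mul_pos_left ((hpos 2).trans (h 0)) (sub_pos.2 (ht (Nat.lt_succ_self 0))).le
  obtain ⟨δ, hδ, hgap⟩ := exists_pos_forall_sub_div_le ha₀ ha
  set r : ℕ → ℝ := fun m => t (m + 1) / t m with hr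
  have hstep : ∀ m, r (m + 1) ≤ r m - δ := by
    intro m
    have hr_pos : 0 < r m := div_pos (hpos _) (hpos _)
    calc r (m + 1) = t (m + 2) / t (m + 1) := rfl
      _ ≤ a * (t (m + 1) - t m) / t (m + 1) := div_le_div_of_nonneg_right (h m).le (hpos _).le
      _ = a - a / r m := by
        have := (hpos (m + 1)).ne'
        have := (hpos m).ne'
        simp only [hr]
        field_simp
      _ ≤ r m - δ := hgap _ hr_pos
  obtain ⟨m, hm⟩ := exists_lt_of_le_sub hδ hstep 0
  exact hm.not_ge (div_pos (hpos _) (hpos _)).le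

/-- Deterministic lower bound for online bidding: for any sequence of positive
bids `x 1, x 2, ...` with partial sums `s n = x 1 + ... + x n`, and any `a < 4`,
it is impossible that `s (n+1) / x n < a` for all `n ≥ 1`; equivalently there is
some `n ≥ 1` with `s (n+1) / x n ≥ a`, so `sup_n s (n+1) / x n ≥ 4`. -/
theorem stmt0 (x : ℕ → ℝ) (hx : ∀ n, 1 ≤ n → 0 < x n) (a : ℝ) (ha : a < 4) :
    ∃ n, 1 ≤ n ∧ a ≤ (∑ i ∈ Finset.Icc 1 (n + 1), x i) / x n := by
  by_contra! hcon
  set t : ℕ → ℝ := fun m => ∑ i ∈ Finset.Icc 1 (m + 1), x i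
  have ht_succ : ∀ m, t (m + 1) = t m + x (m + 2) :=
    fun m => Finset.sum_Icc_succ_top (by omega) x
  refine StrictMono.not_forall_lt_mul_sub (t := t) (strictMono_nat_of_lt_succ fun m => ?_) ?_ ha
    fun m => ?_
  · rw [ht_succ]
    linarith [hx (m + 2) (by omega)]
  · simpa [t] using hx 1 le_rfl
  · rw [ht_succ m, add_sub_cancel_left]
    exact (div_lt_iff₀ (hx _ (by omega))).1 (hcon (m + 2) (by omega))
end

section
/- Let ξ be uniformly distributed on [0,1) and T > 0. Let b = e^{i+ξ} where i is the smallest integer with e^{i+ξ} ≥ T. Then E[b] = T(e − 1). -/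
/-!
Writing `c = log T`, the exponent is `⌈c - ξ⌉ + ξ = c + fract (ξ - c)`, so `b = T e^{fract (ξ - c)}`.
The function `ξ ↦ e^{fract ξ}` is `1`-periodic, so its integral over a period is unchanged by the
shift `ξ ↦ ξ - c`, and over `[0, 1)` it is `∫₀¹ eˣ dx = e - 1`.
-/

open MeasureTheory

theorem Int.ceil_sub_add_eq_add_fract (c ξ : ℝ) : (⌈c - ξ⌉ : ℝ) + ξ = c + Int.fract (ξ - c) := by
  rw [Int.fract, ← neg_sub c ξ, Int.floor_neg]
  push_cast
  ring

theorem intervalIntegral_comp_fract_sub {E : Type*} [NormedAddCommGroup E] [NormedSpace ℝ E]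
    (f : ℝ → E) (c : ℝ) :
    ∫ x in (0 : ℝ)..1, f (Int.fract (x - c)) = ∫ x in (0 : ℝ)..1, f (Int.fract x) := by
  have hperiodic : Function.Periodic (fun x => f (Int.fract x)) 1 :=
    (Int.fract_periodic ℝ).comp f
  rw [intervalIntegral.integral_comp_sub_right (fun x => f (Int.fract x))]
  simpa [sub_eq_neg_add] using hperiodic.intervalIntegral_add_eq (-c) 0

theorem intervalIntegral_comp_fract {E : Type*} [NormedAddCommGroup E] [NormedSpace ℝ E]
    (f : ℝ → E) : ∫ x in (0 : ℝ)..1, f (Int.fract x) = ∫ x in (0 : ℝ)..1, f x := by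
  rw [intervalIntegral.integral_of_le zero_le_one, intervalIntegral.integral_of_le zero_le_one,
    integral_Ioc_eq_integral_Ioo, integral_Ioc_eq_integral_Ioo]
  refine setIntegral_congr_fun measurableSet_Ioo fun x hx => ?_
  rw [Int.fract_eq_self.mpr ⟨hx.1.le, hx.2⟩]

theorem integral_Ico_eq_intervalIntegral {E : Type*} [NormedAddCommGroup E] [NormedSpace ℝ E]
    (f : ℝ → E) {a b : ℝ} (hab : a ≤ b) : ∫ x in Set.Ico a b, f x = ∫ x in a..b, f x := by
  rw [intervalIntegral.integral_of_le hab, integral_Ico_eq_integral_Ioo,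
    integral_Ioc_eq_integral_Ioo]

/-- Let `ξ` be uniform on `[0,1)` and `T > 0`. Let `b = e^(i+ξ)` where `i` is the
smallest integer with `e^(i+ξ) ≥ T`, i.e. `i = ⌈log T - ξ⌉`. Then
`E[b] = T (e - 1)`. -/
theorem stmt5 (T : ℝ) (hT : 0 < T) :
    ∫ ξ in Set.Ico (0 : ℝ) 1, Real.exp ((⌈Real.log T - ξ⌉ : ℝ) + ξ)
      = T * (Real.exp 1 - 1) := by
  have hintegrand (ξ : ℝ) :
      Real.exp ((⌈Real.log T - ξ⌉ : ℝ) + ξ) = T * Real.exp (Int.fract (ξ - Real.log T)) := by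
    rw [Int.ceil_sub_add_eq_add_fract, Real.exp_add, Real.exp_log hT]
  simp only [hintegrand, integral_Ico_eq_intervalIntegral _ zero_le_one,
    intervalIntegral.integral_const_mul, intervalIntegral_comp_fract_sub Real.exp,
    intervalIntegral_comp_fract Real.exp, integral_exp, Real.exp_zero]
end

section
/- Fix n ∈ ℕ⁺ and functions μ, π : {1,...,n} → ℝ≥0 satisfying ∑_{T=t}^{n} π(T)/T ≥ (1/b)·∑_{T=t}^{b} μ(T) for all 1 ≤ t ≤ b ≤ n. Then every randomized online bidding algorithm for universe {1,...,n} has competitive ratio at least (∑_{T=1}^n μ(T)) / (∑_{T=1}^n π(T)). -/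
/-! Fix one bid set `B ∋ n`. Bid `b ∈ B` is paid exactly at the thresholds `T > prevBid B b`, the
largest bid below `b`, so weighting thresholds by `π T / T` charges `b` the amount
`b · ∑_{T > prevBid B b} π T / T`, which by the dual constraint with `t = prevBid B b + 1` is at
least `∑_{prevBid B b < T ≤ b} μ T`. These intervals partition `{1, …, n}`, so the `π T / T`-weighted
payments of every single bid set add up to at least `∑ μ`. Averaging over the
algorithm and using `β`-competitiveness threshold by threshold bounds the same quantity by
`β ∑ π`. -/

/-- Against threshold `T`, a bid set `B` pays all bids `b ∈ B` with
`b ≤ min {b' ∈ B : b' ≥ T}`, i.e. all `b ∈ B` with `b ≤ b'` for every `b' ∈ B`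
with `b' ≥ T`. -/
def pay (B : Finset ℕ) (T : ℕ) : ℕ :=
  ∑ b ∈ B.filter (fun b => ∀ b' ∈ B, T ≤ b' → b ≤ b'), b

open Finset

/-- `0` when `B` has no bid below `b`; harmless because thresholds start at `1`. -/
def prevBid (B : Finset ℕ) (b : ℕ) : ℕ :=
  (B.filter (· < b)).sup id

section prevBid

variable {B : Finset ℕ} {b : ℕ}

lemma le_prevBid {c : ℕ} (hc : c ∈ B) (hcb : c < b) : c ≤ prevBid B b :=
  le_sup (f := id) (mem_filter.2 ⟨hc, hcb⟩)

lemma prevBid_lt (hb : 0 < b) : prevBid B b < b :=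
  (Finset.sup_lt_iff hb).2 fun _ hc => (mem_filter.1 hc).2

lemma prevBid_lt_iff {T : ℕ} (hT : 0 < T) :
    prevBid B b < T ↔ ∀ b' ∈ B, T ≤ b' → b ≤ b' := by
  rw [prevBid, Finset.sup_lt_iff hT]
  simp only [mem_filter, id, and_imp]
  exact forall₂_congr fun b' _ => by omega

lemma pairwiseDisjoint_Icc_prevBid :
    (B : Set ℕ).PairwiseDisjoint fun b => Icc (prevBid B b + 1) b := by
  intro b hb b' hb' hne
  simp only [Function.onFun, disjoint_left, mem_Icc]
  rcases hne.lt_or_gt with h | h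
  · have := le_prevBid hb h; omega
  · have := le_prevBid hb' h; omega

lemma biUnion_Icc_prevBid {n : ℕ} (hBn : ∀ b ∈ B, b ≤ n) (hn : n ∈ B) :
    B.biUnion (fun b => Icc (prevBid B b + 1) b) = Icc 1 n := by
  ext T
  simp only [mem_biUnion, mem_Icc]
  constructor
  · rintro ⟨b, hb, hTb, hbT⟩
    exact ⟨by omega, hbT.trans (hBn b hb)⟩
  · rintro ⟨hT, hTn⟩
    have hne : (B.filter (T ≤ ·)).Nonempty := ⟨n, mem_filter.2 ⟨hn, hTn⟩⟩
    obtain ⟨hbB, hTb⟩ := mem_filter.1 (min'_mem _ hne)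
    refine ⟨_, hbB, Nat.succ_le_of_lt ((prevBid_lt_iff hT).2 fun b' hb' hTb' => ?_), hTb⟩
    exact min'_le _ _ (mem_filter.2 ⟨hb', hTb'⟩)

lemma sum_sum_Icc_prevBid {M : Type*} [AddCommMonoid M] (f : ℕ → M) {n : ℕ}
    (hBn : ∀ b ∈ B, b ≤ n) (hn : n ∈ B) :
    ∑ b ∈ B, ∑ T ∈ Icc (prevBid B b + 1) b, f T = ∑ T ∈ Icc 1 n, f T := by
  rw [← biUnion_Icc_prevBid hBn hn, sum_biUnion pairwiseDisjoint_Icc_prevBid]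

end prevBid

lemma sum_mul_pay (B : Finset ℕ) (n : ℕ) (f : ℕ → ℝ) :
    ∑ T ∈ Icc 1 n, f T * pay B T = ∑ b ∈ B, b * ∑ T ∈ Icc (prevBid B b + 1) n, f T := by
  simp only [pay, Nat.cast_sum]
  simp only [mul_sum, sum_filter, mul_ite, mul_zero]
  rw [sum_comm]
  refine sum_congr rfl fun b _ => ?_
  rw [← sum_filter]
  refine sum_congr ?_ fun _ _ => mul_comm _ _
  ext T
  simp only [mem_filter, mem_Icc]
  constructor
  · rintro ⟨⟨hT, hTn⟩, hpaid⟩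
    exact ⟨Nat.succ_le_of_lt ((prevBid_lt_iff hT).2 hpaid), hTn⟩
  · rintro ⟨hT, hTn⟩
    exact ⟨⟨by omega, hTn⟩, (prevBid_lt_iff (by omega)).1 hT⟩

lemma sum_le_sum_div_mul_pay {n : ℕ} {μ π : ℕ → ℝ}
    (hdual : ∀ t b, 1 ≤ t → t ≤ b → b ≤ n →
      (1 / (b : ℝ)) * ∑ T ∈ Icc t b, μ T ≤ ∑ T ∈ Icc t n, π T / T)
    {B : Finset ℕ} (hBsub : B ⊆ Icc 1 n) (hn : n ∈ B) :
    ∑ T ∈ Icc 1 n, μ T ≤ ∑ T ∈ Icc 1 n, π T / T * pay B T := by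
  have hB : ∀ b ∈ B, 1 ≤ b ∧ b ≤ n := fun b hb => mem_Icc.1 (hBsub hb)
  rw [sum_mul_pay, ← sum_sum_Icc_prevBid μ (fun b hb => (hB b hb).2) hn]
  refine sum_le_sum fun b hb => ?_
  have hb_pos : (0 : ℝ) < b := by exact_mod_cast (hB b hb).1
  rw [← div_le_iff₀' hb_pos, ← one_div_mul_eq_div]
  exact hdual _ b (by omega) (prevBid_lt (hB b hb).1) (hB b hb).2

theorem stmt8_general (n : ℕ) (hn : 1 ≤ n) (μ π : ℕ → ℝ)
    (hπ : ∀ T, 0 ≤ π T)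
    (hdual : ∀ t b, 1 ≤ t → t ≤ b → b ≤ n →
      (1 / (b : ℝ)) * ∑ T ∈ Finset.Icc t b, μ T ≤ ∑ T ∈ Finset.Icc t n, π T / T)
    (𝒮 : Finset (Finset ℕ)) (w : Finset ℕ → ℝ)
    (hw : ∀ B, 0 ≤ w B) (hw1 : ∑ B ∈ 𝒮, w B = 1)
    (hB : ∀ B ∈ 𝒮, B ⊆ Finset.Icc 1 n ∧ n ∈ B)
    (β : ℝ)
    (hcomp : ∀ T ∈ Finset.Icc 1 n, ∑ B ∈ 𝒮, w B * (pay B T : ℝ) ≤ β * T) :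
    (∑ T ∈ Finset.Icc 1 n, μ T) / (∑ T ∈ Finset.Icc 1 n, π T) ≤ β := by
  have hβ : 0 ≤ β := by
    have h := (sum_nonneg fun B _ => mul_nonneg (hw B) (Nat.cast_nonneg _)).trans
      (hcomp 1 (mem_Icc.2 ⟨le_rfl, hn⟩))
    simpa using h
  refine div_le_of_le_mul₀ (sum_nonneg fun T _ => hπ T) hβ ?_
  calc ∑ T ∈ Icc 1 n, μ T = ∑ B ∈ 𝒮, w B * ∑ T ∈ Icc 1 n, μ T := by
        rw [← sum_mul, hw1, one_mul]
    _ ≤ ∑ B ∈ 𝒮, w B * ∑ T ∈ Icc 1 n, π T / T * pay B T :=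
        sum_le_sum fun B hBS => mul_le_mul_of_nonneg_left
          (sum_le_sum_div_mul_pay hdual (hB B hBS).1 (hB B hBS).2) (hw B)
    _ = ∑ T ∈ Icc 1 n, π T / T * ∑ B ∈ 𝒮, w B * pay B T := by
        simp only [mul_sum]
        rw [sum_comm]
        exact sum_congr rfl fun T _ => sum_congr rfl fun B _ => by ring
    _ ≤ ∑ T ∈ Icc 1 n, π T / T * (β * T) :=
        sum_le_sum fun T hT => mul_le_mul_of_nonneg_left (hcomp T hT)
          (div_nonneg (hπ T) (Nat.cast_nonneg T))
    _ = β * ∑ T ∈ Icc 1 n, π T := by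
        rw [mul_sum]
        refine sum_congr rfl fun T hT => ?_
        have : (T : ℝ) ≠ 0 := by have := (mem_Icc.1 hT).1; positivity
        field_simp

/-- LP-duality lower bound for randomized online bidding with universe
`{1, ..., n}`: if `μ, π : [n] → ℝ≥0` satisfy
`∑_{T=t}^n π T / T ≥ (1/b) ∑_{T=t}^b μ T` for all `1 ≤ t ≤ b ≤ n`, then every
randomized bidding algorithm (a finitely supported distribution `w` over bid
sets `B ⊆ [n]` containing `n`) that is `β`-competitive satisfies
`β ≥ (∑ μ) / (∑ π)`. -/
theorem stmt8 (n : ℕ) (hn : 1 ≤ n) (μ π : ℕ → ℝ)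
    (hμ : ∀ T, 0 ≤ μ T) (hπ : ∀ T, 0 ≤ π T)
    (hdual : ∀ t b, 1 ≤ t → t ≤ b → b ≤ n →
      (1 / (b : ℝ)) * ∑ T ∈ Finset.Icc t b, μ T ≤ ∑ T ∈ Finset.Icc t n, π T / T)
    (𝒮 : Finset (Finset ℕ)) (w : Finset ℕ → ℝ)
    (hw : ∀ B, 0 ≤ w B) (hw1 : ∑ B ∈ 𝒮, w B = 1)
    (hB : ∀ B ∈ 𝒮, B ⊆ Finset.Icc 1 n ∧ n ∈ B)
    (β : ℝ)
    (hcomp : ∀ T ∈ Finset.Icc 1 n, ∑ B ∈ 𝒮, w B * (pay B T : ℝ) ≤ β * T) :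
    (∑ T ∈ Finset.Icc 1 n, μ T) / (∑ T ∈ Finset.Icc 1 n, π T) ≤ β :=
  stmt8_general n hn μ π hπ hdual 𝒮 w hw hw1 hB β hcomp
end

section
/- For every ε > 0 there exists n and functions μ, π : {1,...,n} → ℝ≥0 with ∑_{T=t}^{n} π(T)/T ≥ (1/b)·∑_{T=t}^{b} μ(T) for all 1 ≤ t ≤ b ≤ n, and (∑_T μ(T))/(∑_T π(T)) ≥ (1−ε)·e. -/
open Finset

private lemma icc_inter (a b c d : ℕ) :
    Finset.Icc a b ∩ Finset.Icc c d = Finset.Icc (max a c) (min b d) := by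
  ext x; simp only [Finset.mem_inter, Finset.mem_Icc]; omega

/-- discrete harmonic upper bound -/
private lemma harmUB (s : ℕ) (hs : 1 ≤ s) : ∀ m, s ≤ m →
    ∑ T ∈ Finset.Icc s m, (1:ℝ)/T ≤ 1/s + Real.log ((m:ℝ)/s) := by
  have hsR : (0:ℝ) < s := by exact_mod_cast hs
  intro m hm
  induction m, hm using Nat.le_induction with
  | base => simp [div_self hsR.ne']
  | succ m hm ih =>
    have hmR : (0:ℝ) < m := by exact_mod_cast (hs.trans hm)
    have hm1R : (0:ℝ) < (m:ℝ) + 1 := by positivity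
    have hlog : 1/((m:ℝ)+1) ≤ Real.log ((m:ℝ)+1) - Real.log m := by
      have h := Real.log_le_sub_one_of_pos (show (0:ℝ) < (m:ℝ)/((m:ℝ)+1) by positivity)
      rw [Real.log_div hmR.ne' hm1R.ne'] at h
      have : (m:ℝ)/((m:ℝ)+1) - 1 = -(1/((m:ℝ)+1)) := by field_simp; ring
      linarith [this ▸ h]
    rw [Finset.sum_Icc_succ_top (by omega)]
    rw [Real.log_div hmR.ne' hsR.ne'] at ih
    rw [Real.log_div (by positivity) hsR.ne']
    push_cast
    linarith

/-- discrete harmonic lower bound -/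
private lemma harmLB (s : ℕ) (hs : 1 ≤ s) : ∀ m, s ≤ m →
    Real.log (((m:ℝ)+1)/s) ≤ ∑ T ∈ Finset.Icc s m, (1:ℝ)/T := by
  have hsR : (0:ℝ) < s := by exact_mod_cast hs
  intro m hm
  induction m, hm using Nat.le_induction with
  | base =>
    have h := Real.log_le_sub_one_of_pos (show (0:ℝ) < ((s:ℝ)+1)/s by positivity)
    have : ((s:ℝ)+1)/s - 1 = 1/s := by field_simp; ring
    simp only [Finset.Icc_self, Finset.sum_singleton]
    linarith [this ▸ h]
  | succ m hm ih =>
    have hmR : (0:ℝ) < m := by exact_mod_cast (hs.trans hm)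
    have hm1R : (0:ℝ) < (m:ℝ) + 1 := by positivity
    have hm2R : (0:ℝ) < (m:ℝ) + 2 := by positivity
    have hlog : Real.log ((m:ℝ)+2) - Real.log ((m:ℝ)+1) ≤ 1/((m:ℝ)+1) := by
      have h := Real.log_le_sub_one_of_pos (show (0:ℝ) < ((m:ℝ)+2)/((m:ℝ)+1) by positivity)
      rw [Real.log_div hm2R.ne' hm1R.ne'] at h
      have : ((m:ℝ)+2)/((m:ℝ)+1) - 1 = 1/((m:ℝ)+1) := by field_simp; norm_num
      linarith [this ▸ h]
    rw [Finset.sum_Icc_succ_top (by omega)]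
    rw [Real.log_div hm1R.ne' hsR.ne'] at ih
    rw [Real.log_div (by positivity) hsR.ne']
    push_cast
    rw [show ((m:ℝ)+1+1) = (m:ℝ)+2 by ring]
    linarith

/-- telescoping lower bound on sum of 1/T^2 -/
private lemma sqLB (s : ℕ) (hs : 1 ≤ s) : ∀ n, s ≤ n →
    1/(s:ℝ) - 1/((n:ℝ)+1) ≤ ∑ T ∈ Finset.Icc s n, 1/((T:ℝ)*(T:ℝ)) := by
  have hsR : (0:ℝ) < s := by exact_mod_cast hs
  intro n hn
  induction n, hn using Nat.le_induction with
  | base =>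
    simp only [Finset.Icc_self, Finset.sum_singleton]
    have : 1/(s:ℝ) - 1/((s:ℝ)+1) = 1/((s:ℝ)*((s:ℝ)+1)) := by field_simp; ring
    rw [this]
    gcongr
    nlinarith
  | succ n hn ih =>
    have hnR : (0:ℝ) < n := by exact_mod_cast (hs.trans hn)
    have h1 : 1/((n:ℝ)+1) - 1/((n:ℝ)+2) ≤ 1/(((n:ℝ)+1)*((n:ℝ)+1)) := by
      have : 1/((n:ℝ)+1) - 1/((n:ℝ)+2) = 1/(((n:ℝ)+1)*((n:ℝ)+2)) := by
        rw [div_sub_div _ _ (by positivity) (by positivity)]; norm_num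
      rw [this]
      gcongr
      nlinarith
    rw [Finset.sum_Icc_succ_top (by omega)]
    push_cast
    rw [show ((n:ℝ)+1+1) = (n:ℝ)+2 by ring]
    linarith

/-- max of (1/s + log(b/s))/b -/
private lemma keyD (s b : ℝ) (hs : 0 < s) (hb : 0 < b) :
    (1/b) * (1/s + Real.log (b/s)) ≤ Real.exp (1/s - 1) / s := by
  have hx : (0:ℝ) < b/s * Real.exp (1/s-1) := by positivity
  have h := Real.log_le_sub_one_of_pos hx
  rw [Real.log_mul (by positivity) (Real.exp_ne_zero _), Real.log_exp] at h
  have h2 : 1/s + Real.log (b/s) ≤ b/s * Real.exp (1/s-1) := by linarith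
  calc (1/b) * (1/s + Real.log (b/s)) ≤ (1/b) * (b/s * Real.exp (1/s-1)) :=
        mul_le_mul_of_nonneg_left h2 (by positivity)
    _ = Real.exp (1/s-1) / s := by field_simp

/-- the dual feasibility constraint, on the essential supports -/
private lemma key (U n : ℕ) (α : ℝ) (hU : 1 ≤ U) (hn : U^2 ≤ n) (hα0 : 0 ≤ α)
    (hα : α * Real.exp (1/(U:ℝ) - 1) ≤ 1 - ((U:ℝ)^2)/((n:ℝ)+1)) (t b : ℕ)
    (ht : 1 ≤ t) (htb : t ≤ b) (hbn : b ≤ n) :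
    (1/(b:ℝ)) * ∑ T ∈ Finset.Icc (max t U) (min b (U^2)), α/(T:ℝ)
      ≤ ∑ T ∈ Finset.Icc (max t U) n, 1/((T:ℝ)*(T:ℝ)) := by
  have hRHS : (0:ℝ) ≤ ∑ T ∈ Finset.Icc (max t U) n, 1/((T:ℝ)*(T:ℝ)) := by
    apply Finset.sum_nonneg; intro i _; positivity
  set s := max t U with hs_def
  set m := min b (U^2) with hm_def
  by_cases hsm : s ≤ m
  · have hs1 : 1 ≤ s := ht.trans (le_max_left t U)
    have hsU : U ≤ s := le_max_right t U
    have hmb : m ≤ b := min_le_left _ _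
    have hmU2 : m ≤ U^2 := min_le_right _ _
    have hsn : s ≤ n := (hsm.trans hmb).trans hbn
    have hb1 : 1 ≤ b := hs1.trans (hsm.trans hmb)
    have hsR : (0:ℝ) < s := by exact_mod_cast hs1
    have hbR : (0:ℝ) < b := by exact_mod_cast hb1
    have hmR : (0:ℝ) < m := by exact_mod_cast hs1.trans hsm
    have hUR : (0:ℝ) < U := by exact_mod_cast hU
    have hn1R : (0:ℝ) < (n:ℝ)+1 := by positivity
    have hsum : ∑ T ∈ Finset.Icc s m, α/(T:ℝ) = α * ∑ T ∈ Finset.Icc s m, (1:ℝ)/T := by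
      rw [Finset.mul_sum]; exact Finset.sum_congr rfl fun i _ => by rw [mul_one_div]
    have h1 : ∑ T ∈ Finset.Icc s m, (1:ℝ)/T ≤ 1/s + Real.log ((b:ℝ)/s) := by
      refine (harmUB s hs1 m hsm).trans ?_
      have hmb' : (m:ℝ) ≤ b := by exact_mod_cast hmb
      have : Real.log ((m:ℝ)/s) ≤ Real.log ((b:ℝ)/s) :=
        Real.log_le_log (by positivity) (by gcongr)
      linarith
    have h2 : (1/(b:ℝ)) * (1/s + Real.log ((b:ℝ)/s)) ≤ Real.exp (1/(s:ℝ) - 1) / s :=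
      keyD _ _ hsR hbR
    have h3 : Real.exp (1/(s:ℝ) - 1) ≤ Real.exp (1/(U:ℝ) - 1) := by
      apply Real.exp_le_exp.mpr
      have : (1:ℝ)/s ≤ 1/U := by
        apply one_div_le_one_div_of_le hUR; exact_mod_cast hsU
      linarith
    have hsU2R : (s:ℝ) ≤ (U:ℝ)^2 := by exact_mod_cast hsm.trans hmU2
    have h4 : (1 - ((U:ℝ)^2)/((n:ℝ)+1))/s ≤ 1/(s:ℝ) - 1/((n:ℝ)+1) := by
      rw [sub_div]
      have : 1/((n:ℝ)+1) ≤ ((U:ℝ)^2)/((n:ℝ)+1)/s := by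
        rw [div_div, div_le_div_iff₀ hn1R (by positivity)]
        nlinarith
      linarith
    have h5 : 1/(s:ℝ) - 1/((n:ℝ)+1) ≤ ∑ T ∈ Finset.Icc s n, 1/((T:ℝ)*(T:ℝ)) :=
      sqLB s hs1 n hsn
    calc (1/(b:ℝ)) * ∑ T ∈ Finset.Icc s m, α/(T:ℝ)
        = α * ((1/(b:ℝ)) * ∑ T ∈ Finset.Icc s m, (1:ℝ)/T) := by rw [hsum]; ring
      _ ≤ α * ((1/(b:ℝ)) * (1/s + Real.log ((b:ℝ)/s))) := by
          apply mul_le_mul_of_nonneg_left _ hα0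
          apply mul_le_mul_of_nonneg_left h1 (by positivity)
      _ ≤ α * (Real.exp (1/(s:ℝ) - 1) / s) := mul_le_mul_of_nonneg_left h2 hα0
      _ ≤ α * (Real.exp (1/(U:ℝ) - 1) / s) := by
          apply mul_le_mul_of_nonneg_left _ hα0; gcongr
      _ = (α * Real.exp (1/(U:ℝ) - 1)) / s := by ring
      _ ≤ (1 - ((U:ℝ)^2)/((n:ℝ)+1))/s := by gcongr
      _ ≤ 1/(s:ℝ) - 1/((n:ℝ)+1) := h4
      _ ≤ _ := h5
  · rw [Finset.Icc_eq_empty hsm]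
    simpa using hRHS

private lemma finalNum (ε x L2 u α : ℝ) (hx : 4 ≤ x)
    (hεx : 5/x ≤ ε) (hL2 : (0.6931471803:ℝ) < L2) (hu0 : 0 ≤ u) (hu1 : u ≤ 1)
    (hαlb : Real.exp 1 * (1-1/x) * (1-1/x) ≤ α) (hα0 : 0 ≤ α) :
    (1 - ε) * Real.exp 1 ≤ α * (x^2 * L2) / (u + (x^2+x) * L2) := by
  have hx0 : (0:ℝ) < x := by linarith
  have hD'pos : (0:ℝ) < u + (x^2+x) * L2 := by nlinarith
  have hinvx : 1/x ≤ 1/4 := by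
    apply one_div_le_one_div_of_le (by norm_num) hx
  have hinvx0 : 0 < 1/x := by positivity
  have hE : (0:ℝ) < Real.exp 1 := Real.exp_pos 1
  have h13 : (0:ℝ) ≤ 1 - 3/x := by
    have h : 3/x = 3*(1/x) := by ring
    rw [h]; nlinarith
  have hxL2 : (2:ℝ) ≤ x * L2 := by nlinarith
  have hstepA : u + (x^2+x)*L2 ≤ (x^2+3*x)*L2 := by nlinarith
  have hfrac : 1 - 3/x ≤ x^2 * L2 / (u + (x^2+x) * L2) := by
    rw [le_div_iff₀ hD'pos]
    have h1 : (1-3/x) * (u + (x^2+x)*L2) ≤ (1-3/x) * ((x^2+3*x)*L2) :=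
      mul_le_mul_of_nonneg_left hstepA h13
    have h2 : (1-3/x) * ((x^2+3*x)*L2) = (x^2-9)*L2 := by
      field_simp
      ring
    nlinarith
  have step1 : (1 - ε) * Real.exp 1 ≤ Real.exp 1 * (1 - 1/x) * (1 - 1/x) * (1 - 3/x) := by
    have h5 : 1 - ε ≤ 1 - 5/x := by linarith
    have hkey : 1 - 5/x ≤ (1 - 1/x) * (1 - 1/x) * (1 - 3/x) := by
      have e5 : 5/x = 5*(1/x) := by ring
      have e3 : 3/x = 3*(1/x) := by ring
      rw [e5, e3]
      nlinarith [hinvx, hinvx0,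
        mul_nonneg (mul_nonneg hinvx0.le hinvx0.le) (show (0:ℝ) ≤ 1/4 - 1/x by linarith)]
    calc (1 - ε) * Real.exp 1 ≤ ((1 - 1/x) * (1 - 1/x) * (1 - 3/x)) * Real.exp 1 :=
          mul_le_mul_of_nonneg_right (h5.trans hkey) hE.le
      _ = Real.exp 1 * (1 - 1/x) * (1 - 1/x) * (1 - 3/x) := by ring
  have step2 : Real.exp 1 * (1 - 1/x) * (1 - 1/x) * (1 - 3/x) ≤ α * (1 - 3/x) :=
    mul_le_mul_of_nonneg_right hαlb h13
  have step3 : α * (1 - 3/x) ≤ α * (x^2 * L2 / (u + (x^2+x) * L2)) :=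
    mul_le_mul_of_nonneg_left hfrac hα0
  calc (1 - ε) * Real.exp 1 ≤ Real.exp 1 * (1 - 1/x) * (1 - 1/x) * (1 - 3/x) := step1
    _ ≤ α * (1 - 3/x) := step2
    _ ≤ α * (x^2 * L2 / (u + (x^2+x) * L2)) := step3
    _ = α * (x^2 * L2) / (u + (x^2+x) * L2) := by ring


/-- Dual witness for the randomized online-bidding lower bound: for every
`ε > 0` there are `n` and nonnegative `μ, π` on `{1, ..., n}` satisfying the
dual feasibility condition `∑_{T=t}^n π T / T ≥ (1/b) ∑_{T=t}^b μ T` for all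
`1 ≤ t ≤ b ≤ n`, whose objective ratio `(∑ μ) / (∑ π)` is at least `(1-ε) e`. -/
theorem stmt9 (ε : ℝ) (hε : 0 < ε) :
    ∃ (n : ℕ) (μ π : ℕ → ℝ), 1 ≤ n ∧ (∀ T, 0 ≤ μ T) ∧ (∀ T, 0 ≤ π T) ∧
      (∀ t b, 1 ≤ t → t ≤ b → b ≤ n →
        (1 / (b : ℝ)) * ∑ T ∈ Finset.Icc t b, μ T ≤ ∑ T ∈ Finset.Icc t n, π T / T) ∧
      (1 - ε) * Real.exp 1 ≤
        (∑ T ∈ Finset.Icc 1 n, μ T) / (∑ T ∈ Finset.Icc 1 n, π T) := by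
  classical
  set k : ℕ := max 4 ⌈5/ε⌉₊ with hk_def
  have hk4 : 4 ≤ k := le_max_left _ _
  have hxk : (4:ℝ) ≤ (k:ℝ) := by exact_mod_cast hk4
  have hx0 : (0:ℝ) < (k:ℝ) := by linarith
  have hεk : 5/(k:ℝ) ≤ ε := by
    have h1 : (5:ℝ)/ε ≤ (⌈5/ε⌉₊ : ℝ) := Nat.le_ceil _
    have h2 : ((⌈5/ε⌉₊:ℕ) : ℝ) ≤ (k:ℝ) := by exact_mod_cast le_max_right 4 ⌈5/ε⌉₊
    rw [div_le_iff₀ hx0]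
    rw [div_le_iff₀ hε] at h1
    nlinarith
  set U : ℕ := 2^(k^2) with hU_def
  set n : ℕ := 2^(2*k^2+k) with hn_def
  have hU1 : 1 ≤ U := Nat.one_le_two_pow
  have hU2n : U^2 ≤ n := by
    rw [hU_def, hn_def, ← pow_mul]
    exact Nat.pow_le_pow_right (by norm_num) (by omega)
  have hn1 : 1 ≤ n := Nat.one_le_two_pow
  have hUn : U^2 * 2^k = n := by rw [hU_def, hn_def, ← pow_mul, ← pow_add]; congr 1; ring
  have hUR : (0:ℝ) < U := by exact_mod_cast hU1
  have h2k0 : (0:ℝ) < 2^k := by positivity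
  have h2kinv : (1:ℝ)/2^k ≤ 1/(k:ℝ) := by
    apply one_div_le_one_div_of_le hx0
    exact_mod_cast (Nat.lt_two_pow_self (n := k)).le
  have hUinv : (1:ℝ)/U ≤ 1/(k:ℝ) := by
    apply one_div_le_one_div_of_le hx0
    have : k ≤ U := le_trans (Nat.lt_two_pow_self (n := k)).le
      (Nat.pow_le_pow_right (by norm_num) (by nlinarith))
    exact_mod_cast this
  have hUinv1 : (1:ℝ)/U ≤ 1 := by
    rw [div_le_one hUR]; exact_mod_cast hU1
  set α : ℝ := Real.exp 1 * Real.exp (-(1/(U:ℝ))) * (1 - 1/2^k) with hα_def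
  have h2k1 : (1:ℝ) ≤ 2^k := one_le_pow₀ (by norm_num)
  have hα0 : 0 ≤ α := by
    apply mul_nonneg (by positivity)
    rw [sub_nonneg, div_le_one h2k0]
    exact h2k1
  -- the key feasibility bound on α
  have hαkey : α * Real.exp (1/(U:ℝ) - 1) ≤ 1 - ((U:ℝ)^2)/((n:ℝ)+1) := by
    have hexp : Real.exp 1 * Real.exp (-(1/(U:ℝ))) * Real.exp (1/(U:ℝ) - 1) = 1 := by
      rw [← Real.exp_add, ← Real.exp_add,
        show (1:ℝ) + -(1/(U:ℝ)) + (1/(U:ℝ) - 1) = 0 by ring, Real.exp_zero]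
    have h1 : α * Real.exp (1/(U:ℝ) - 1) = 1 - 1/2^k := by
      rw [hα_def]
      calc Real.exp 1 * Real.exp (-(1/(U:ℝ))) * (1 - 1/2^k) * Real.exp (1/(U:ℝ) - 1)
          = Real.exp 1 * Real.exp (-(1/(U:ℝ))) * Real.exp (1/(U:ℝ) - 1) * (1 - 1/2^k) := by
            ring
        _ = 1 - 1/2^k := by rw [hexp, one_mul]
    rw [h1]
    have h2 : ((U:ℝ)^2)/((n:ℝ)+1) ≤ 1/2^k := by
      rw [div_le_div_iff₀ (by positivity) h2k0]
      have : ((U:ℝ)^2) * 2^k = (n:ℝ) := by exact_mod_cast congrArg (Nat.cast (R := ℝ)) hUn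
      rw [this]; linarith
    linarith
  refine ⟨n, fun T => if T ∈ Finset.Icc U (U^2) then α/(T:ℝ) else 0,
    fun T => if T ∈ Finset.Icc U n then (1:ℝ)/(T:ℝ) else 0, hn1, ?_, ?_, ?_, ?_⟩
  · intro T; dsimp only; split_ifs with h
    · have h1 : 1 ≤ T := le_trans hU1 (Finset.mem_Icc.mp h).1
      have h2 : (0:ℝ) < T := by exact_mod_cast h1
      positivity
    · exact le_refl 0
  · intro T; dsimp only; split_ifs with h
    · positivity
    · exact le_refl 0
  · -- feasibility
    intro t b ht htb hbn
    dsimp only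
    have hπ : ∑ T ∈ Finset.Icc t n, (if T ∈ Finset.Icc U n then (1:ℝ)/(T:ℝ) else 0)/(T:ℝ)
        = ∑ T ∈ Finset.Icc t n, (if T ∈ Finset.Icc U n then 1/((T:ℝ)*(T:ℝ)) else 0) := by
      refine Finset.sum_congr rfl fun T _ => ?_
      split_ifs with h
      · rw [div_div]
      · rw [zero_div]
    rw [hπ, Finset.sum_ite_mem, Finset.sum_ite_mem, icc_inter, icc_inter, min_self]
    exact key U n α hU1 hU2n hα0 hαkey t b ht htb hbn
  · -- objective ratio
    dsimp only
    rw [Finset.sum_ite_mem, Finset.sum_ite_mem, icc_inter, icc_inter,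
      max_eq_right hU1, min_eq_right hU2n, min_eq_right (le_refl n)]
    set L2 : ℝ := Real.log 2 with hL2_def
    have hL2 : (0.6931471803:ℝ) < L2 := Real.log_two_gt_d9
    set x : ℝ := (k:ℝ) with hx_def
    -- numerator lower bound
    have hUU2 : U ≤ U^2 := by nlinarith
    have hU2R : (0:ℝ) < (U^2 : ℕ) := by
      have : 1 ≤ U^2 := le_trans hU1 hUU2
      exact_mod_cast this
    have hlogU : Real.log (U:ℝ) = x^2 * L2 := by
      rw [hU_def, hL2_def, hx_def]
      push_cast
      rw [Real.log_pow]
      push_cast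
      ring
    have hNum : α * (x^2 * L2) ≤ ∑ T ∈ Finset.Icc U (U^2), α/(T:ℝ) := by
      have hsum : ∑ T ∈ Finset.Icc U (U^2), α/(T:ℝ)
          = α * ∑ T ∈ Finset.Icc U (U^2), (1:ℝ)/T := by
        rw [Finset.mul_sum]; exact Finset.sum_congr rfl fun i _ => by rw [mul_one_div]
      rw [hsum]
      apply mul_le_mul_of_nonneg_left _ hα0
      refine le_trans ?_ (harmLB U hU1 (U^2) hUU2)
      rw [← hlogU]
      apply Real.log_le_log hUR
      rw [le_div_iff₀ hUR]
      have : ((U^2:ℕ):ℝ) = (U:ℝ)^2 := by push_cast; ring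
      rw [this]; nlinarith
    -- denominator upper bound
    have hUn' : U ≤ n := le_trans hUU2 hU2n
    have hnU : ((n:ℕ):ℝ)/(U:ℝ) = 2^(k^2+k) := by
      have h1 : ((n:ℕ):ℝ) = (U:ℝ) * 2^(k^2+k) := by
        rw [hn_def, hU_def]
        push_cast
        rw [← pow_add]
        congr 1
        ring
      rw [h1, mul_div_cancel_left₀ _ hUR.ne']
    have hDen : ∑ T ∈ Finset.Icc U n, (1:ℝ)/T ≤ 1/(U:ℝ) + (x^2+x) * L2 := by
      refine le_trans (harmUB U hU1 n hUn') (le_of_eq ?_)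
      rw [hnU, Real.log_pow, hL2_def, hx_def]
      push_cast
      ring
    have hπpos : 0 < ∑ T ∈ Finset.Icc U n, (1:ℝ)/T := by
      refine lt_of_lt_of_le ?_ (harmLB U hU1 n hUn')
      apply Real.log_pos
      rw [lt_div_iff₀ hUR]
      have : (U:ℝ) ≤ n := by exact_mod_cast hUn'
      linarith
    -- assemble
    have hD'pos : (0:ℝ) < 1/(U:ℝ) + (x^2+x) * L2 := by positivity
    have hαlb : Real.exp 1 * (1 - 1/x) * (1 - 1/x) ≤ α := by
      rw [hα_def]
      have he1 : 1 - 1/x ≤ Real.exp (-(1/(U:ℝ))) := by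
        have := Real.add_one_le_exp (-(1/(U:ℝ)))
        linarith [hUinv]
      have he2 : 1 - 1/x ≤ 1 - 1/(2:ℝ)^k := by linarith [h2kinv]
      have h0 : (0:ℝ) ≤ 1 - 1/x := by
        rw [sub_nonneg, div_le_one hx0]; linarith
      have hE : (0:ℝ) < Real.exp 1 := Real.exp_pos 1
      apply mul_le_mul (mul_le_mul_of_nonneg_left he1 hE.le) he2 h0
      positivity
    have hchain : (1 - ε) * Real.exp 1 ≤ α * (x^2 * L2) / (1/(U:ℝ) + (x^2+x) * L2) :=
      finalNum ε x L2 (1/(U:ℝ)) α hxk hεk hL2 (by positivity) hUinv1 hαlb hα0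
    refine le_trans hchain ?_
    apply div_le_div₀ _ hNum hπpos hDen
    exact le_trans (mul_nonneg hα0 (by positivity)) hNum
end

section
/- Let d be a metric on a set containing customers X and facilities. Let A, B be finite sets of facilities and let Γ ⊆ B be a set such that for every μ ∈ A, d(μ, Γ) = d(μ, B) (i.e., Γ contains, for each μ ∈ A, a closest point of B to μ). Then for every customer x, d(x, Γ) ≤ 2·d(x, A) + d(x, B). -/
open Metric

section

variable {X : Type*} [PseudoMetricSpace X]

theorem Metric.infDist_le_two_mul_dist_add_infDist {Γ B : Set X} {μ : X}
    (hμ : infDist μ Γ = infDist μ B) (x : X) :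
    infDist x Γ ≤ 2 * dist x μ + infDist x B := by
  have hxΓ : infDist x Γ ≤ infDist μ Γ + dist x μ := infDist_le_infDist_add_dist
  have hμB : infDist μ B ≤ infDist x B + dist μ x := infDist_le_infDist_add_dist
  rw [dist_comm] at hμB
  linarith

theorem Metric.infDist_le_two_mul_infDist_add_infDist {A B Γ : Set X} (hA : A.Nonempty)
    (hnear : ∀ μ ∈ A, infDist μ Γ = infDist μ B) (x : X) :
    infDist x Γ ≤ 2 * infDist x A + infDist x B := by
  have half_gap_le : (infDist x Γ - infDist x B) / 2 ≤ infDist x A :=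
    (le_infDist hA).2 fun μ hμ => by
      linarith [infDist_le_two_mul_dist_add_infDist (hnear μ hμ) x]
  linarith

end

theorem stmt12_general {X : Type*} [MetricSpace X] (A B Γ : Finset X)
    (hA : A.Nonempty)
    (hnear : ∀ μ ∈ A, Metric.infDist μ (Γ : Set X) = Metric.infDist μ (B : Set X)) :
    ∀ x : X, Metric.infDist x (Γ : Set X)
      ≤ 2 * Metric.infDist x (A : Set X) + Metric.infDist x (B : Set X) :=
  infDist_le_two_mul_infDist_add_infDist (Finset.coe_nonempty.2 hA) hnear

/-- Projection lemma: in a metric space, if `Γ ⊆ B` contains for each `μ ∈ A` a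
closest point of `B` to `μ` (so that `d(μ, Γ) = d(μ, B)`), then for every point
`x`, `d(x, Γ) ≤ 2 d(x, A) + d(x, B)`. -/
theorem stmt12 {X : Type*} [MetricSpace X] (A B Γ : Finset X)
    (hA : A.Nonempty) (hΓ : Γ.Nonempty) (hΓB : Γ ⊆ B)
    (hnear : ∀ μ ∈ A, Metric.infDist μ (Γ : Set X) = Metric.infDist μ (B : Set X)) :
    ∀ x : X, Metric.infDist x (Γ : Set X)
      ≤ 2 * Metric.infDist x (A : Set X) + Metric.infDist x (B : Set X) :=
  stmt12_general A B Γ hA hnear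
end

section
/- Suppose for each k ∈ [n] we have facility sets F*_k with |F*_k| ≤ s·k and cost(F*_k) ≤ opt_k, and B ⊆ [n] is a β-competitive bid set for universe [n] (for every T ∈ [n], the sum of all b ∈ B with b ≤ min{b' ∈ B : b' ≥ T} is at most βT, and max B = n). Define F_k = ⋃_{b ∈ B, b ≤ k⁺} F*_b where k⁺ = min{b ∈ B : b ≥ k}. Then (F_k) is a nested sequence with cost(F_k) ≤ opt_k and |F_k| ≤ s·β·k for all k. -/
/-!
The bid `k⁺` is paid at threshold `k`, so `F k ⊇ F* k⁺` and
`cost (F k) ≤ cost (F* k⁺) ≤ opt k⁺ ≤ opt k`. Each `F* b` with `b` paid contributes at most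
`s b` facilities, so `|F k| ≤ s · pay k ≤ s β k`. Finally, the set of bids paid at threshold `k`
only grows with `k`, which makes the sequence nested.
-/

open scoped ENNReal

/-- Cost of a facility set `F`: each customer `u ∈ C` pays its distance to the
nearest facility in `F` (`⊤` if `F` is empty). -/
noncomputable def cost14 {α γ : Type*} (C : Finset γ) (d : γ → α → ℝ≥0∞)
    (F : Finset α) : ℝ≥0∞ :=
  ∑ u ∈ C, ⨅ f ∈ F, d u f

/-- `opt k`: the minimum cost of any facility set of size at most `k`. -/
noncomputable def opt14 {α γ : Type*} (C : Finset γ) (d : γ → α → ℝ≥0∞)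
    (k : ℕ) : ℝ≥0∞ :=
  ⨅ (F : Finset α) (_ : F.card ≤ k), cost14 C d F

/-- Against threshold `T`, bid set `B` pays all bids `b ∈ B` with
`b ≤ min {b' ∈ B : b' ≥ T}`. -/
def pay14 (B : Finset ℕ) (T : ℕ) : ℕ :=
  ∑ b ∈ B.filter (fun b => ∀ b' ∈ B, T ≤ b' → b ≤ b'), b

section Cost

variable {α γ : Type*} (C : Finset γ) (d : γ → α → ℝ≥0∞)

theorem cost14_antitone : Antitone (cost14 C d) := fun _ _ hF =>
  Finset.sum_le_sum fun _ _ => le_iInf₂ fun f hf => iInf₂_le f (hF hf)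

theorem opt14_antitone : Antitone (opt14 C d) := fun _ _ hkm =>
  iInf_mono fun _ => iInf_const_mono fun h => h.trans hkm

end Cost

section Bidding

def paidBids (B : Finset ℕ) (k : ℕ) : Finset ℕ :=
  B.filter fun b => ∀ b' ∈ B, k ≤ b' → b ≤ b'

theorem pay14_eq_sum_paidBids (B : Finset ℕ) (k : ℕ) : pay14 B k = ∑ b ∈ paidBids B k, b := rfl

theorem paidBids_mono (B : Finset ℕ) : Monotone (paidBids B) := fun _ _ hkl _ hb => by
  simp only [paidBids, Finset.mem_filter] at hb ⊢
  exact ⟨hb.1, fun b' hb' hlb' => hb.2 b' hb' (hkl.trans hlb')⟩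

/-- The smallest bid at least `k` is paid against threshold `k`. -/
theorem exists_mem_paidBids_ge {B : Finset ℕ} {k b₀ : ℕ} (hb₀ : b₀ ∈ B) (hkb₀ : k ≤ b₀) :
    ∃ b ∈ paidBids B k, k ≤ b := by
  have hne : (B.filter (k ≤ ·)).Nonempty := ⟨b₀, Finset.mem_filter.2 ⟨hb₀, hkb₀⟩⟩
  obtain ⟨hmemB, hkmin⟩ := Finset.mem_filter.1 (Finset.min'_mem _ hne)
  refine ⟨_, Finset.mem_filter.2 ⟨hmemB, fun b' hb' hkb' => ?_⟩, hkmin⟩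
  exact Finset.min'_le _ _ (Finset.mem_filter.2 ⟨hb', hkb'⟩)

end Bidding

theorem Finset.card_biUnion_le_sum_of_card_le {ι α : Type*} [DecidableEq α] {S : Finset ι}
    {G : ι → Finset α} {f : ι → ℝ} (hG : ∀ i ∈ S, ((G i).card : ℝ) ≤ f i) :
    ((S.biUnion G).card : ℝ) ≤ ∑ i ∈ S, f i :=
  calc ((S.biUnion G).card : ℝ) ≤ ∑ i ∈ S, ((G i).card : ℝ) := mod_cast Finset.card_biUnion_le
    _ ≤ ∑ i ∈ S, f i := Finset.sum_le_sum hG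

theorem stmt14_general {α γ : Type*} [DecidableEq α] (C : Finset γ) (d : γ → α → ℝ≥0∞)
    (n : ℕ) (s βr : ℝ) (hs : 0 ≤ s)
    (Fstar : ℕ → Finset α)
    (hsize : ∀ k ∈ Finset.Icc 1 n, ((Fstar k).card : ℝ) ≤ s * k)
    (hcost : ∀ k ∈ Finset.Icc 1 n, cost14 C d (Fstar k) ≤ opt14 C d k)
    (B : Finset ℕ) (hBsub : B ⊆ Finset.Icc 1 n) (hnB : n ∈ B)
    (hβ : ∀ T ∈ Finset.Icc 1 n, ((pay14 B T : ℕ) : ℝ) ≤ βr * T)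
    (F : ℕ → Finset α)
    (hF : ∀ k, F k = (B.filter (fun b => ∀ b' ∈ B, k ≤ b' → b ≤ b')).biUnion Fstar) :
    ∀ k ∈ Finset.Icc 1 n,
      (∀ l ∈ Finset.Icc 1 n, k ≤ l → F k ⊆ F l) ∧
      cost14 C d (F k) ≤ opt14 C d k ∧
      ((F k).card : ℝ) ≤ s * βr * k := by
  have hF' : ∀ k, F k = (paidBids B k).biUnion Fstar := hF
  have hpaid : ∀ {k b}, b ∈ paidBids B k → b ∈ Finset.Icc 1 n := fun hb =>
    hBsub (Finset.mem_filter.1 hb).1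
  intro k hk
  refine ⟨fun l _ hkl => ?_, ?_, ?_⟩
  · rw [hF', hF']
    exact Finset.biUnion_subset_biUnion_of_subset_left _ (paidBids_mono B hkl)
  · obtain ⟨b, hb, hkb⟩ := exists_mem_paidBids_ge hnB (Finset.mem_Icc.1 hk).2
    calc cost14 C d (F k) ≤ cost14 C d (Fstar b) :=
          cost14_antitone C d (hF' k ▸ Finset.subset_biUnion_of_mem Fstar hb)
      _ ≤ opt14 C d b := hcost b (hpaid hb)
      _ ≤ opt14 C d k := opt14_antitone C d hkb
  · calc ((F k).card : ℝ) ≤ ∑ b ∈ paidBids B k, s * b :=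
          hF' k ▸ Finset.card_biUnion_le_sum_of_card_le fun b hb => hsize b (hpaid hb)
      _ = s * pay14 B k := by rw [pay14_eq_sum_paidBids, ← Finset.mul_sum]; push_cast; rfl
      _ ≤ s * βr * k := by rw [mul_assoc]; exact mul_le_mul_of_nonneg_left (hβ k hk) hs

/-- Reduction from size-competitive oblivious medians to online bidding: given
`s`-size-approximate offline solutions `F* k` (of size at most `s k` and cost at
most `opt k`) and a `β`-competitive bid set `B ⊆ [n]` with `n ∈ B`, the sets
`F k = ⋃ {F* b : b ∈ B, b ≤ k⁺}` (where `k⁺ = min {b ∈ B : b ≥ k}`) form a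
nested sequence with `cost (F k) ≤ opt k` and `|F k| ≤ s β k`. -/
theorem stmt14 {α γ : Type*} [DecidableEq α] (C : Finset γ) (d : γ → α → ℝ≥0∞)
    (n : ℕ) (hn : 1 ≤ n) (s βr : ℝ) (hs : 0 ≤ s)
    (Fstar : ℕ → Finset α)
    (hsize : ∀ k ∈ Finset.Icc 1 n, ((Fstar k).card : ℝ) ≤ s * k)
    (hcost : ∀ k ∈ Finset.Icc 1 n, cost14 C d (Fstar k) ≤ opt14 C d k)
    (B : Finset ℕ) (hBsub : B ⊆ Finset.Icc 1 n) (hnB : n ∈ B)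
    (hβ : ∀ T ∈ Finset.Icc 1 n, ((pay14 B T : ℕ) : ℝ) ≤ βr * T)
    (F : ℕ → Finset α)
    (hF : ∀ k, F k = (B.filter (fun b => ∀ b' ∈ B, k ≤ b' → b ≤ b')).biUnion Fstar) :
    ∀ k ∈ Finset.Icc 1 n,
      (∀ l ∈ Finset.Icc 1 n, k ≤ l → F k ⊆ F l) ∧
      cost14 C d (F k) ≤ opt14 C d k ∧
      ((F k).card : ℝ) ≤ s * βr * k :=
  stmt14_general C d n s βr hs Fstar hsize hcost B hBsub hnB hβ F hF
end

section
/- Let M_1, ..., M_m be pairwise disjoint finite sets with |M_k| = k, and let F_1 ⊆ F_2 ⊆ ... ⊆ F_m be a nested family of sets with |F_k| ≤ s·k for all k. Suppose that for every k, some M_ℓ with ℓ ≥ k is contained in F_k. Define B = {k : M_k ⊆ F_k}. Then for every T ∈ [m], ∑{k ∈ B : k < T} + min{ℓ ∈ B : ℓ ≥ T} ≤ s·T. -/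
/-!
Fix `T` and let `A` be the bids `k ∈ B` below `T`, and `ℓ₀ ≥ T` an index with `M ℓ₀ ⊆ F T`.
By nestedness every `M k` with `k ∈ A ∪ {ℓ₀}` lies in `F T`, and these sets are pairwise disjoint
of size `k`, so `∑ A + ℓ₀ ≤ |F T| ≤ s T`. Since `M ℓ₀ ⊆ F T ⊆ F ℓ₀`, `ℓ₀ ∈ B`, so the least bid
`ℓ ≥ T` exists and is at most `ℓ₀`.
-/

open Finset

theorem Finset.sum_card_le_card_of_pairwiseDisjoint {ι α : Type*} [DecidableEq α]
    {I : Finset ι} {M : ι → Finset α} {F : Finset α}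
    (hdisj : (I : Set ι).PairwiseDisjoint M) (hsub : ∀ i ∈ I, M i ⊆ F) :
    ∑ i ∈ I, (M i).card ≤ F.card := by
  rw [← card_biUnion hdisj]
  exact card_le_card (biUnion_subset.mpr hsub)

theorem sum_bids_lt_add_le_card {α : Type*} [DecidableEq α] {m : ℕ} {M F : ℕ → Finset α}
    (hdisj : ∀ i ∈ Icc 1 m, ∀ j ∈ Icc 1 m, i ≠ j → Disjoint (M i) (M j))
    (hcard : ∀ k ∈ Icc 1 m, (M k).card = k)
    (hnest : ∀ k l, k ≤ l → l ≤ m → F k ⊆ F l)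
    {T l : ℕ} (hTm : T ≤ m) (hTl : T ≤ l) (hl : l ∈ Icc 1 m) (hMl : M l ⊆ F T) :
    ∑ k ∈ (Icc 1 m).filter (fun k => M k ⊆ F k ∧ k < T), k + l ≤ (F T).card := by
  set A := (Icc 1 m).filter (fun k => M k ⊆ F k ∧ k < T)
  have hlA : l ∉ A := fun h => by have := (mem_filter.mp h).2.2; omega
  have hI : ∀ k ∈ insert l A, k ∈ Icc 1 m := by
    simp only [mem_insert, forall_eq_or_imp]
    exact ⟨hl, fun k hk => (mem_filter.mp hk).1⟩
  have hsub : ∀ k ∈ insert l A, M k ⊆ F T := by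
    simp only [mem_insert, forall_eq_or_imp]
    refine ⟨hMl, fun k hk => ?_⟩
    obtain ⟨-, hMk, hkT⟩ := mem_filter.mp hk
    exact hMk.trans (hnest k T hkT.le hTm)
  calc ∑ k ∈ A, k + l = ∑ k ∈ insert l A, (M k).card := by
        rw [sum_congr rfl fun k hk => hcard k (hI k hk), sum_insert hlA, add_comm]
    _ ≤ (F T).card := sum_card_le_card_of_pairwiseDisjoint
        (fun i hi j hj hij => hdisj i (hI i hi) j (hI j hj) hij) hsub

theorem stmt15_general {α : Type*} [DecidableEq α] (m : ℕ)
    (M F : ℕ → Finset α) (s : ℝ)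
    (hdisj : ∀ i ∈ Finset.Icc 1 m, ∀ j ∈ Finset.Icc 1 m, i ≠ j → Disjoint (M i) (M j))
    (hcard : ∀ k ∈ Finset.Icc 1 m, (M k).card = k)
    (hnest : ∀ k l, k ≤ l → l ≤ m → F k ⊆ F l)
    (hFcard : ∀ k ∈ Finset.Icc 1 m, ((F k).card : ℝ) ≤ s * k)
    (hcover : ∀ k ∈ Finset.Icc 1 m, ∃ l, k ≤ l ∧ l ≤ m ∧ M l ⊆ F k) :
    ∀ T ∈ Finset.Icc 1 m, ∃ ℓ, ℓ ∈ Finset.Icc 1 m ∧ M ℓ ⊆ F ℓ ∧ T ≤ ℓ ∧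
      (∀ ℓ' ∈ Finset.Icc 1 m, M ℓ' ⊆ F ℓ' → T ≤ ℓ' → ℓ ≤ ℓ') ∧
      ((∑ k ∈ (Finset.Icc 1 m).filter (fun k => M k ⊆ F k ∧ k < T), k : ℕ) : ℝ)
        + (ℓ : ℝ) ≤ s * T := by
  intro T hT
  obtain ⟨l₀, hTl₀, hl₀m, hMl₀⟩ := hcover T hT
  have hl₀ : l₀ ∈ Icc 1 m := mem_Icc.mpr ⟨(mem_Icc.mp hT).1.trans hTl₀, hl₀m⟩
  have hl₀bid : l₀ ∈ Icc 1 m ∧ M l₀ ⊆ F l₀ ∧ T ≤ l₀ :=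
    ⟨hl₀, hMl₀.trans (hnest T l₀ hTl₀ hl₀m), hTl₀⟩
  have hbid : ∃ ℓ, ℓ ∈ Icc 1 m ∧ M ℓ ⊆ F ℓ ∧ T ≤ ℓ := ⟨l₀, hl₀bid⟩
  obtain ⟨hℓ, hMℓ, hTℓ⟩ := Nat.find_spec hbid
  refine ⟨Nat.find hbid, hℓ, hMℓ, hTℓ, fun ℓ' h₁ h₂ h₃ => Nat.find_min' hbid ⟨h₁, h₂, h₃⟩, ?_⟩
  have hℓl₀ : Nat.find hbid ≤ l₀ := Nat.find_min' hbid hl₀bid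
  calc _ ≤ (((F T).card : ℕ) : ℝ) := by
        exact_mod_cast (Nat.add_le_add_left hℓl₀ _).trans
          (sum_bids_lt_add_le_card hdisj hcard hnest (mem_Icc.mp hT).2 hTl₀ hl₀ hMl₀)
    _ ≤ s * T := hFcard T hT

/-- Combinatorial core of the reduction from online bidding to size-competitive
oblivious medians: with pairwise disjoint `M k` of size `k`, a nested family
`F k` of size at most `s k` such that each `F k` contains some `M l` with
`l ≥ k`, the set `B = {k : M k ⊆ F k}` is an `s`-competitive bid set: for every
`T ∈ [m]`, the minimal `ℓ ∈ B` with `ℓ ≥ T` exists, and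
`∑ {k ∈ B : k < T} + ℓ ≤ s T`. -/
theorem stmt15 {α : Type*} [DecidableEq α] (m : ℕ) (hm : 1 ≤ m)
    (M F : ℕ → Finset α) (s : ℝ)
    (hdisj : ∀ i ∈ Finset.Icc 1 m, ∀ j ∈ Finset.Icc 1 m, i ≠ j → Disjoint (M i) (M j))
    (hcard : ∀ k ∈ Finset.Icc 1 m, (M k).card = k)
    (hnest : ∀ k l, k ≤ l → l ≤ m → F k ⊆ F l)
    (hFcard : ∀ k ∈ Finset.Icc 1 m, ((F k).card : ℝ) ≤ s * k)
    (hcover : ∀ k ∈ Finset.Icc 1 m, ∃ l, k ≤ l ∧ l ≤ m ∧ M l ⊆ F k) :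
    ∀ T ∈ Finset.Icc 1 m, ∃ ℓ, ℓ ∈ Finset.Icc 1 m ∧ M ℓ ⊆ F ℓ ∧ T ≤ ℓ ∧
      (∀ ℓ' ∈ Finset.Icc 1 m, M ℓ' ⊆ F ℓ' → T ≤ ℓ' → ℓ ≤ ℓ') ∧
      ((∑ k ∈ (Finset.Icc 1 m).filter (fun k => M k ⊆ F k ∧ k < T), k : ℕ) : ℝ)
        + (ℓ : ℝ) ≤ s * T :=
  stmt15_general m M F s hdisj hcard hnest hFcard hcover
end

section
/- Suppose functions μ, π : [n] → ℝ≥0 with ∑_T π(T) ≤ 1 satisfy ∑_{T=t}^{b} μ(T) ≤ ∑_{T=t}^{n} (b/T)·π(T) for all 1 ≤ t ≤ b ≤ n, and suppose nonnegative reals x(t,b) (1 ≤ t, b ≤ n) and β satisfy ∑_{b=1}^{n} (b/T)·∑_{t=1}^{T} x(t,b) ≤ β and ∑_{b=T}^{n} ∑_{t=1}^{T} x(t,b) ≥ 1 for all T ∈ [n]. Then β ≥ ∑_{T=1}^{n} μ(T). -/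
/-!
Weak duality, computed directly. Multiply each covering constraint `∑_{b ≥ T} ∑_{t ≤ T} x t b ≥ 1`
by `μ T` and sum: exchanging the order of summation regroups the result as
`∑_{t ≤ b} x t b ∑_{T=t}^b μ T`, which the dual constraints bound by
`∑_{t ≤ b} x t b ∑_{T ≥ t} (b / T) π T`. Enlarging to all pairs `(t, b)` and exchanging the order
once more gives `∑_T π T ∑_b (b / T) ∑_{t ≤ T} x t b ≤ ∑_T π T β ≤ β`.
-/

open Finset

namespace Finset

theorem sum_Icc_sum_Icc_comm {α M : Type*} [Preorder α] [LocallyFiniteOrder α]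
    [AddCommMonoid M] (a n : α) (f : α → α → M) :
    ∑ i ∈ Icc a n, ∑ j ∈ Icc i n, f i j = ∑ j ∈ Icc a n, ∑ i ∈ Icc a j, f i j :=
  sum_comm' fun i j => by
    simp only [mem_Icc]
    exact ⟨fun ⟨⟨hai, _⟩, hij, hjn⟩ => ⟨⟨hai, hij⟩, hai.trans hij, hjn⟩,
      fun ⟨⟨hai, hij⟩, _, hjn⟩ => ⟨⟨hai, hij.trans hjn⟩, hij, hjn⟩⟩

end Finset

namespace OnlineBidding

variable {M : Type*} [AddCommMonoid M]

theorem sum_cover_eq_sum_interval (n : ℕ) (f : ℕ → ℕ → ℕ → M) :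
    ∑ T ∈ Icc 1 n, ∑ b ∈ Icc T n, ∑ t ∈ Icc 1 T, f t T b =
      ∑ b ∈ Icc 1 n, ∑ t ∈ Icc 1 b, ∑ T ∈ Icc t b, f t T b := by
  rw [sum_Icc_sum_Icc_comm]
  exact sum_congr rfl fun b _ => (sum_Icc_sum_Icc_comm 1 b fun t T => f t T b).symm

theorem sum_tail_eq_sum_prefix (n : ℕ) (g : ℕ → ℕ → ℕ → M) :
    ∑ b ∈ Icc 1 n, ∑ t ∈ Icc 1 n, ∑ T ∈ Icc t n, g t T b =
      ∑ T ∈ Icc 1 n, ∑ b ∈ Icc 1 n, ∑ t ∈ Icc 1 T, g t T b :=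
  (sum_congr rfl fun b _ => sum_Icc_sum_Icc_comm 1 n fun t T => g t T b).trans sum_comm

end OnlineBidding

open OnlineBidding

/-- Weak LP duality for the online-bidding linear program: if `(μ, π)` is dual
feasible (`∑ π ≤ 1` and `∑_{T=t}^b μ T ≤ ∑_{T=t}^n (b/T) π T` for all
`1 ≤ t ≤ b ≤ n`) and `(x, β)` is primal feasible
(`∑_b (b/T) ∑_{t≤T} x t b ≤ β` and `∑_{b≥T} ∑_{t≤T} x t b ≥ 1` for all
`T ∈ [n]`, `x ≥ 0`), then `β ≥ ∑ μ`. -/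
theorem stmt19 (n : ℕ) (hn : 1 ≤ n) (μ π : ℕ → ℝ)
    (hμ : ∀ T, 0 ≤ μ T) (hπ : ∀ T, 0 ≤ π T)
    (hπ1 : ∑ T ∈ Finset.Icc 1 n, π T ≤ 1)
    (hdual : ∀ t b, 1 ≤ t → t ≤ b → b ≤ n →
      ∑ T ∈ Finset.Icc t b, μ T ≤ ∑ T ∈ Finset.Icc t n, ((b : ℝ) / T) * π T)
    (x : ℕ → ℕ → ℝ) (hx : ∀ t b, 0 ≤ x t b) (β : ℝ)
    (hprim1 : ∀ T ∈ Finset.Icc 1 n,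
      ∑ b ∈ Finset.Icc 1 n, ((b : ℝ) / T) * ∑ t ∈ Finset.Icc 1 T, x t b ≤ β)
    (hprim2 : ∀ T ∈ Finset.Icc 1 n,
      1 ≤ ∑ b ∈ Finset.Icc T n, ∑ t ∈ Finset.Icc 1 T, x t b) :
    ∑ T ∈ Finset.Icc 1 n, μ T ≤ β := by
  have hprice : ∀ t b : ℕ, 0 ≤ ∑ T ∈ Icc t n, ((b : ℝ) / T) * π T := fun t b =>
    sum_nonneg fun T _ => mul_nonneg (by positivity) (hπ T)
  have hβ : 0 ≤ β := (sum_nonneg fun b _ => mul_nonneg (by positivity)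
    (sum_nonneg fun t _ => hx t b)).trans (hprim1 1 (by simp [hn]))
  calc ∑ T ∈ Icc 1 n, μ T
      ≤ ∑ T ∈ Icc 1 n, μ T * ∑ b ∈ Icc T n, ∑ t ∈ Icc 1 T, x t b :=
        sum_le_sum fun T hT => le_mul_of_one_le_right (hμ T) (hprim2 T hT)
    _ = ∑ b ∈ Icc 1 n, ∑ t ∈ Icc 1 b, (∑ T ∈ Icc t b, μ T) * x t b := by
        simp only [mul_sum, sum_mul]
        exact sum_cover_eq_sum_interval n fun t T b => μ T * x t b
    _ ≤ ∑ b ∈ Icc 1 n, ∑ t ∈ Icc 1 b, (∑ T ∈ Icc t n, ((b : ℝ) / T) * π T) * x t b := by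
        gcongr with b hb t ht
        · exact hx t b
        · exact hdual t b (mem_Icc.1 ht).1 (mem_Icc.1 ht).2 (mem_Icc.1 hb).2
    _ ≤ ∑ b ∈ Icc 1 n, ∑ t ∈ Icc 1 n, (∑ T ∈ Icc t n, ((b : ℝ) / T) * π T) * x t b := by
        refine sum_le_sum fun b hb => ?_
        exact sum_le_sum_of_subset_of_nonneg (Icc_subset_Icc_right (mem_Icc.1 hb).2)
          fun t _ _ => mul_nonneg (hprice t b) (hx t b)
    _ = ∑ T ∈ Icc 1 n, π T * ∑ b ∈ Icc 1 n, ((b : ℝ) / T) * ∑ t ∈ Icc 1 T, x t b := by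
        simp only [mul_sum, sum_mul]
        rw [sum_tail_eq_sum_prefix n fun t T b => (b : ℝ) / T * π T * x t b]
        exact sum_congr rfl fun _ _ => sum_congr rfl fun _ _ => sum_congr rfl fun _ _ => by ring
    _ ≤ ∑ T ∈ Icc 1 n, π T * β :=
        sum_le_sum fun T hT => mul_le_mul_of_nonneg_left (hprim1 T hT) (hπ T)
    _ ≤ β := by
        rw [← sum_mul]
        exact mul_le_of_le_one_left hβ hπ1
end
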